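/- arXiv:2602.09537 — 4 statements merged into one kernel-verified Lean document; each statement's English description precedes it below -/
import Mathlib

section
/- Let (Ω, ℱ, P) be a probability space, 𝒢 ⊆ ℱ a sub-σ-algebra, A : Ω → {0,1} measurable, W : Ω → ℝ bounded measurable, π a 𝒢-measurable version of E[A | 𝒢] with π > 0 almost surely, Q a bounded 𝒢-measurable function with π·Q = E[A·W | 𝒢] almost surely, and η = E[Q]. Let π_n be a bounded 𝒢-measurable function with π_n ≥ ε > 0 almost surely and Q_n a bounded 𝒢-measurable function, and set η_n = E[Q_n]. Then the first-order bias of the one-step estimator satisfies the exact identity (η_n − η) + E[ Q_n − η_n + (A/π_n)·(W − Q_n) ] = E[ ((π_n − π)/π_n) · (Q_n − Q) ]. -/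
open MeasureTheory

/-- No-censoring remainder identity in the proof of Theorem 2:
`(η_n − η) + E[Q_n − η_n + (A/π_n)(W − Q_n)] = E[((π_n − π)/π_n)(Q_n − Q)]`,
exhibiting the doubly robust product structure of the first-order bias of the
one-step estimator. -/
theorem remainder_identity_no_censoring {Ω : Type*} (m : MeasurableSpace Ω) {mΩ : MeasurableSpace Ω}
    (μ : Measure Ω) [IsProbabilityMeasure μ] (hm : m ≤ mΩ)
    (A W π Q πn Qn : Ω → ℝ)
    (hA : Measurable A) (hA01 : ∀ ω, A ω = 0 ∨ A ω = 1)
    (hW : Measurable W) (CW : ℝ) (hWbd : ∀ ω, |W ω| ≤ CW)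
    (hπmeas : StronglyMeasurable[m] π) (hπ : π =ᵐ[μ] μ[A | m])
    (hπpos : ∀ᵐ ω ∂μ, 0 < π ω)
    (hQmeas : StronglyMeasurable[m] Q) (CQ : ℝ) (hQbd : ∀ ω, |Q ω| ≤ CQ)
    (hQ : (fun ω => π ω * Q ω) =ᵐ[μ] μ[fun ω => A ω * W ω | m])
    (hπnmeas : StronglyMeasurable[m] πn) (Cπn : ℝ) (hπnbd : ∀ ω, |πn ω| ≤ Cπn)
    (ε : ℝ) (hε : 0 < ε) (hπnlb : ∀ᵐ ω ∂μ, ε ≤ πn ω)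
    (hQnmeas : StronglyMeasurable[m] Qn) (CQn : ℝ) (hQnbd : ∀ ω, |Qn ω| ≤ CQn)
    (η ηn : ℝ) (hη : η = ∫ ω, Q ω ∂μ) (hηn : ηn = ∫ ω, Qn ω ∂μ) :
    (ηn - η) + ∫ ω, (Qn ω - ηn + (A ω / πn ω) * (W ω - Qn ω)) ∂μ
      = ∫ ω, ((πn ω - π ω) / πn ω) * (Qn ω - Q ω) ∂μ := by
  -- notation
  set g : Ω → ℝ := fun ω => (πn ω)⁻¹ with hg_def
  have hA1 : ∀ ω, |A ω| ≤ 1 := by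
    intro ω; rcases hA01 ω with h | h <;> simp [h]
  -- strong measurability of g w.r.t. m
  have hgm : StronglyMeasurable[m] g := hπnmeas.measurable.inv.stronglyMeasurable
  -- a.e. bound on g
  have hgbd : ∀ᵐ ω ∂μ, ‖g ω‖ ≤ ε⁻¹ := by
    filter_upwards [hπnlb] with ω hω
    have h0 : 0 < πn ω := lt_of_lt_of_le hε hω
    rw [Real.norm_eq_abs, abs_inv, abs_of_pos h0]
    exact inv_anti₀ hε hω
  -- integrability helper
  have hbdd_int : ∀ (f : Ω → ℝ) (C : ℝ), AEStronglyMeasurable[mΩ] f μ →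
      (∀ᵐ ω ∂μ, ‖f ω‖ ≤ C) → Integrable f μ := by
    intro f C hmeas hbd
    exact (integrable_const C).mono' hmeas hbd
  have hAmeas : AEStronglyMeasurable[mΩ] A μ := (hA.aestronglyMeasurable (μ := μ))
  have hWmeas : AEStronglyMeasurable[mΩ] W μ := (hW.aestronglyMeasurable (μ := μ))
  have hQnae : AEStronglyMeasurable[mΩ] Qn μ := (hQnmeas.mono hm).aestronglyMeasurable
  have hQae : AEStronglyMeasurable[mΩ] Q μ := (hQmeas.mono hm).aestronglyMeasurable
  have hπae : AEStronglyMeasurable[mΩ] π μ := (hπmeas.mono hm).aestronglyMeasurable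
  have hgae : AEStronglyMeasurable[mΩ] g μ := (hgm.mono hm).aestronglyMeasurable
  -- integrable : A, A*W, A*Qn
  have hIA : Integrable A μ := hbdd_int A 1 hAmeas (Filter.Eventually.of_forall fun ω => hA1 ω)
  have hIAW : Integrable (fun ω => A ω * W ω) μ := by
    refine hbdd_int _ CW (hAmeas.mul hWmeas) (Filter.Eventually.of_forall fun ω => ?_)
    calc ‖A ω * W ω‖ = |A ω| * |W ω| := abs_mul _ _
    _ ≤ 1 * CW := mul_le_mul (hA1 ω) (hWbd ω) (abs_nonneg _) zero_le_one
    _ = CW := one_mul _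
  have hIAQn : Integrable (fun ω => A ω * Qn ω) μ := by
    refine hbdd_int _ CQn (hAmeas.mul hQnae) (Filter.Eventually.of_forall fun ω => ?_)
    calc ‖A ω * Qn ω‖ = |A ω| * |Qn ω| := abs_mul _ _
    _ ≤ 1 * CQn := mul_le_mul (hA1 ω) (hQnbd ω) (abs_nonneg _) zero_le_one
    _ = CQn := one_mul _
  have hIAWQn : Integrable (fun ω => A ω * (W ω - Qn ω)) μ := by
    have : (fun ω => A ω * (W ω - Qn ω))
        = fun ω => A ω * W ω - A ω * Qn ω := by funext ω; ring
    rw [this]; exact hIAW.sub hIAQn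
  -- the key conditional expectation computation
  have h1 : μ[(fun ω => g ω * (A ω * (W ω - Qn ω))) | m]
      =ᵐ[μ] fun ω => g ω * (μ[fun ω' => A ω' * (W ω' - Qn ω')|m]) ω := by
    have := condExp_stronglyMeasurable_mul_of_bound hm hgm hIAWQn ε⁻¹ hgbd
    exact this
  have h2 : μ[(fun ω => A ω * (W ω - Qn ω)) | m]
      =ᵐ[μ] fun ω => π ω * Q ω - Qn ω * π ω := by
    have hsub : (fun ω => A ω * (W ω - Qn ω))
        = fun ω => A ω * W ω - Qn ω * A ω := by funext ω; ring
    have hIQnA : Integrable (fun ω => Qn ω * A ω) μ := by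
      have : (fun ω => Qn ω * A ω) = fun ω => A ω * Qn ω := by funext ω; ring
      rw [this]; exact hIAQn
    have hce : μ[(fun ω => A ω * W ω - Qn ω * A ω)|m]
        =ᵐ[μ] μ[(fun ω => A ω * W ω)|m] - μ[(fun ω => Qn ω * A ω)|m] :=
      condExp_sub hIAW hIQnA m
    have hQnA : μ[(fun ω => Qn ω * A ω)|m] =ᵐ[μ] fun ω => Qn ω * (μ[A|m]) ω := by
      have := condExp_stronglyMeasurable_mul_of_bound hm hQnmeas hIA CQn
        (Filter.Eventually.of_forall fun ω => by
          simpa [Real.norm_eq_abs] using hQnbd ω)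
      exact this
    rw [hsub]
    refine hce.trans ?_
    filter_upwards [hQ, hπ, hQnA] with ω hQω hπω hQnAω
    simp only [Pi.sub_apply]
    rw [← hQω, hQnAω, ← hπω]
  have hkey : ∫ ω, g ω * (A ω * (W ω - Qn ω)) ∂μ
      = ∫ ω, g ω * (π ω * Q ω - Qn ω * π ω) ∂μ := by
    rw [← integral_condExp hm (μ := μ) (f := fun ω => g ω * (A ω * (W ω - Qn ω)))]
    refine integral_congr_ae ?_
    refine h1.trans ?_
    filter_upwards [h2] with ω h2ω
    rw [h2ω]
  -- integrability of the left integrand and splitting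
  have hIgterm : Integrable (fun ω => g ω * (A ω * (W ω - Qn ω))) μ := by
    refine hbdd_int _ (ε⁻¹ * (CW + CQn)) (hgae.mul (hAmeas.mul (hWmeas.sub hQnae))) ?_
    filter_upwards [hgbd] with ω hgω
    calc ‖g ω * (A ω * (W ω - Qn ω))‖ = ‖g ω‖ * (|A ω| * |W ω - Qn ω|) := by
          rw [norm_mul]; rw [Real.norm_eq_abs (A ω * _), abs_mul]
    _ ≤ ε⁻¹ * (1 * (CW + CQn)) := by
        refine mul_le_mul hgω (mul_le_mul (hA1 ω) ?_ (abs_nonneg _) zero_le_one)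
          (mul_nonneg (abs_nonneg _) (abs_nonneg _)) (le_of_lt (inv_pos.mpr hε))
        calc |W ω - Qn ω| ≤ |W ω| + |Qn ω| := abs_sub _ _
        _ ≤ CW + CQn := add_le_add (hWbd ω) (hQnbd ω)
    _ = ε⁻¹ * (CW + CQn) := by ring
  have hIQn : Integrable Qn μ :=
    hbdd_int Qn CQn hQnae (Filter.Eventually.of_forall fun ω => by
      simpa [Real.norm_eq_abs] using hQnbd ω)
  -- rewrite the left integrand
  have hrw : ∀ ω, Qn ω - ηn + (A ω / πn ω) * (W ω - Qn ω)
      = Qn ω - ηn + g ω * (A ω * (W ω - Qn ω)) := by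
    intro ω; rw [hg_def]; ring
  have hsplit : ∫ ω, (Qn ω - ηn + (A ω / πn ω) * (W ω - Qn ω)) ∂μ
      = (∫ ω, Qn ω ∂μ) - ηn + ∫ ω, g ω * (A ω * (W ω - Qn ω)) ∂μ := by
    simp_rw [hrw]
    have hf1 : Integrable (fun ω => Qn ω - ηn) μ := hIQn.sub (integrable_const ηn)
    rw [integral_add hf1 hIgterm]
    have hf2 : (∫ ω, (Qn ω - ηn) ∂μ) = (∫ ω, Qn ω ∂μ) - ηn := by
      rw [integral_sub hIQn (integrable_const ηn)]; simp
    rw [hf2]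
  rw [hsplit, hkey, hη, hηn]
  -- now combine the remaining integrals
  have hπbd_ae : ∀ᵐ ω ∂μ, |π ω| ≤ 1 := by
    have hb := ae_bdd_condExp_of_ae_bdd (μ := μ) (m := m) (R := 1) (f := A)
      (Filter.Eventually.of_forall fun ω => by
        rcases hA01 ω with h | h <;> simp [h])
    filter_upwards [hπ, hb] with ω h1 h2
    rw [h1]; simpa using h2
  have hIgπ : Integrable (fun ω => g ω * (π ω * Q ω - Qn ω * π ω)) μ := by
    refine hbdd_int _ (ε⁻¹ * (CQ + CQn)) (hgae.mul ((hπae.mul hQae).sub (hQnae.mul hπae))) ?_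
    filter_upwards [hgbd, hπbd_ae] with ω hgω hπω
    have hπbd : |π ω * Q ω - Qn ω * π ω| ≤ CQ + CQn := by
      have h1 : |π ω * Q ω| ≤ CQ := by
        rw [abs_mul]
        calc |π ω| * |Q ω| ≤ 1 * CQ := mul_le_mul hπω (hQbd ω) (abs_nonneg _) zero_le_one
        _ = CQ := one_mul _
      have h2 : |Qn ω * π ω| ≤ CQn := by
        rw [abs_mul]
        have hCQn : 0 ≤ CQn := le_trans (abs_nonneg _) (hQnbd ω)
        calc |Qn ω| * |π ω| ≤ CQn * 1 := mul_le_mul (hQnbd ω) hπω (abs_nonneg _) hCQn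
        _ = CQn := mul_one _
      calc |π ω * Q ω - Qn ω * π ω| ≤ |π ω * Q ω| + |Qn ω * π ω| := abs_sub _ _
      _ ≤ CQ + CQn := add_le_add h1 h2
    calc ‖g ω * (π ω * Q ω - Qn ω * π ω)‖ = ‖g ω‖ * |π ω * Q ω - Qn ω * π ω| := by
          rw [norm_mul]; rfl
    _ ≤ ε⁻¹ * (CQ + CQn) :=
        mul_le_mul hgω hπbd (abs_nonneg _) (le_of_lt (inv_pos.mpr hε))
  have hIQ : Integrable Q μ :=
    hbdd_int Q CQ hQae (Filter.Eventually.of_forall fun ω => by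
      simpa [Real.norm_eq_abs] using hQbd ω)
  have hcomb : (∫ ω, Qn ω ∂μ) - (∫ ω, Q ω ∂μ) + ∫ ω, g ω * (π ω * Q ω - Qn ω * π ω) ∂μ
      = ∫ ω, (Qn ω - Q ω + g ω * (π ω * Q ω - Qn ω * π ω)) ∂μ := by
    have hf1 : Integrable (fun ω => Qn ω - Q ω) μ := hIQn.sub hIQ
    rw [integral_add hf1 hIgπ, integral_sub hIQn hIQ]
  have hfin : ∫ ω, (Qn ω - Q ω + g ω * (π ω * Q ω - Qn ω * π ω)) ∂μ
      = ∫ ω, ((πn ω - π ω) / πn ω) * (Qn ω - Q ω) ∂μ := by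
    refine integral_congr_ae ?_
    filter_upwards [hπnlb] with ω hω
    have h0 : πn ω ≠ 0 := ne_of_gt (lt_of_lt_of_le hε hω)
    rw [hg_def]
    field_simp
    ring
  linarith [hcomb, hfin]
end

section
/- In the setting of the no-censoring remainder identity — (Ω, ℱ, P) a probability space, 𝒢 ⊆ ℱ a sub-σ-algebra, A : Ω → {0,1}, W bounded measurable, π > 0 a 𝒢-measurable version of E[A|𝒢], Q bounded 𝒢-measurable with π·Q = E[A·W | 𝒢] a.s., η = E[Q], π_n ≥ ε > 0 and Q_n bounded 𝒢-measurable, η_n = E[Q_n] — if moreover π_n = π almost surely OR Q_n = Q almost surely, then the first-order bias vanishes exactly: (η_n − η) + E[ Q_n − η_n + (A/π_n)·(W − Q_n) ] = 0. -/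
open MeasureTheory

private lemma bdd_integrable {Ω : Type*} {mΩ : MeasurableSpace Ω} {μ : Measure Ω}
    [IsFiniteMeasure μ] {f : Ω → ℝ} (hf : AEStronglyMeasurable f μ) {C : ℝ}
    (h : ∀ᵐ ω ∂μ, ‖f ω‖ ≤ C) : Integrable f μ :=
  (memLp_top_of_bound hf C h).integrable le_top

/-- Double robustness in the uncensored case (read off from the remainder
identity in the proof of Theorem 2): if either the propensity-score nuisance
`π_n` or the outcome-regression nuisance `Q_n` equals the truth (a.s.), then
the first-order bias of the one-step estimator vanishes exactly. -/
theorem double_robustness_no_censoring {Ω : Type*} (m : MeasurableSpace Ω) {mΩ : MeasurableSpace Ω}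
    (μ : Measure Ω) [IsProbabilityMeasure μ] (hm : m ≤ mΩ)
    (A W π Q πn Qn : Ω → ℝ)
    (hA : Measurable A) (hA01 : ∀ ω, A ω = 0 ∨ A ω = 1)
    (hW : Measurable W) (CW : ℝ) (hWbd : ∀ ω, |W ω| ≤ CW)
    (hπmeas : StronglyMeasurable[m] π) (hπ : π =ᵐ[μ] μ[A | m])
    (hπpos : ∀ᵐ ω ∂μ, 0 < π ω)
    (hQmeas : StronglyMeasurable[m] Q) (CQ : ℝ) (hQbd : ∀ ω, |Q ω| ≤ CQ)
    (hQ : (fun ω => π ω * Q ω) =ᵐ[μ] μ[fun ω => A ω * W ω | m])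
    (hπnmeas : StronglyMeasurable[m] πn) (Cπn : ℝ) (hπnbd : ∀ ω, |πn ω| ≤ Cπn)
    (ε : ℝ) (hε : 0 < ε) (hπnlb : ∀ᵐ ω ∂μ, ε ≤ πn ω)
    (hQnmeas : StronglyMeasurable[m] Qn) (CQn : ℝ) (hQnbd : ∀ ω, |Qn ω| ≤ CQn)
    (η ηn : ℝ) (hη : η = ∫ ω, Q ω ∂μ) (hηn : ηn = ∫ ω, Qn ω ∂μ)
    (hDR : πn =ᵐ[μ] π ∨ Qn =ᵐ[μ] Q) :
    (ηn - η) + ∫ ω, (Qn ω - ηn + (A ω / πn ω) * (W ω - Qn ω)) ∂μ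
      = 0 := by
  have hA1 : ∀ ω, |A ω| ≤ 1 := fun ω => by rcases hA01 ω with h | h <;> simp [h]
  have hA' : Measurable[mΩ] A := hA
  have hW' : Measurable[mΩ] W := hW
  -- basic integrabilities
  have hQint : Integrable Q μ :=
    bdd_integrable (hQmeas.mono hm).aestronglyMeasurable
      (Filter.Eventually.of_forall fun ω => by simpa [Real.norm_eq_abs] using hQbd ω)
  have hQnint : Integrable Qn μ :=
    bdd_integrable (hQnmeas.mono hm).aestronglyMeasurable
      (Filter.Eventually.of_forall fun ω => by simpa [Real.norm_eq_abs] using hQnbd ω)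
  have hAint : Integrable A μ :=
    bdd_integrable hA'.aestronglyMeasurable
      (Filter.Eventually.of_forall fun ω => by simpa [Real.norm_eq_abs] using hA1 ω)
  have hAWint : Integrable (fun ω => A ω * W ω) μ :=
    bdd_integrable (hA'.aestronglyMeasurable.mul hW'.aestronglyMeasurable)
      (Filter.Eventually.of_forall fun ω => by
        have := mul_le_mul (hA1 ω) (hWbd ω) (abs_nonneg _) zero_le_one
        simpa [Real.norm_eq_abs, abs_mul] using this)
  -- the product QnA
  have hQnAint : Integrable (Qn * A) μ :=
    bdd_integrable ((hQnmeas.mono hm).aestronglyMeasurable.mul hA'.aestronglyMeasurable)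
      (Filter.Eventually.of_forall fun ω => by
        have := mul_le_mul (hQnbd ω) (hA1 ω) (abs_nonneg _)
          ((abs_nonneg _).trans (hQnbd ω))
        simpa [Real.norm_eq_abs, abs_mul] using this)
  -- g = 1/πn , h = A (W - Qn)
  set g : Ω → ℝ := fun ω => (πn ω)⁻¹ with hg_def
  set h : Ω → ℝ := fun ω => A ω * (W ω - Qn ω) with hh_def
  have hgbd : ∀ᵐ ω ∂μ, ‖g ω‖ ≤ ε⁻¹ := by
    filter_upwards [hπnlb] with ω hω
    have h0 : 0 < πn ω := lt_of_lt_of_le hε hω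
    rw [Real.norm_eq_abs, abs_of_nonneg (inv_nonneg.2 h0.le)]
    exact inv_anti₀ hε hω
  have hgmeas : StronglyMeasurable[m] g := (hπnmeas.measurable.inv).stronglyMeasurable
  have hhbd : ∀ ω, |h ω| ≤ CW + CQn := fun ω => by
    have h1 : |W ω - Qn ω| ≤ CW + CQn := (abs_sub _ _).trans (add_le_add (hWbd ω) (hQnbd ω))
    have := mul_le_mul (hA1 ω) h1 (abs_nonneg _) zero_le_one
    simpa [hh_def, abs_mul] using this
  have hhint : Integrable h μ :=
    bdd_integrable (hA'.aestronglyMeasurable.mul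
        (hW'.aestronglyMeasurable.sub (hQnmeas.mono hm).aestronglyMeasurable))
      (Filter.Eventually.of_forall fun ω => by simpa [Real.norm_eq_abs] using hhbd ω)
  have hghint : Integrable (g * h) μ := by
    refine bdd_integrable (C := ε⁻¹ * (CW + CQn)) (((hgmeas.mono hm).aestronglyMeasurable).mul hhint.1) ?_
    filter_upwards [hgbd] with ω hω
    have : ‖g ω * h ω‖ ≤ ε⁻¹ * (CW + CQn) := by
      rw [norm_mul]
      exact mul_le_mul hω (by simpa [Real.norm_eq_abs] using hhbd ω) (norm_nonneg _)
        (inv_nonneg.2 hε.le)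
    simpa using this
  -- pull-out property
  have hpull : μ[g * h | m] =ᵐ[μ] g * μ[h | m] :=
    condExp_stronglyMeasurable_mul_of_bound hm hgmeas hhint ε⁻¹ hgbd
  have hQnA : μ[Qn * A | m] =ᵐ[μ] Qn * μ[A | m] :=
    condExp_stronglyMeasurable_mul_of_bound hm hQnmeas hAint CQn
      (Filter.Eventually.of_forall fun ω => by simpa [Real.norm_eq_abs] using hQnbd ω)
  have hh_eq : h = fun ω => A ω * W ω - (Qn * A) ω := by
    funext ω; simp only [hh_def, Pi.mul_apply]; ring
  have hsub : μ[h | m] =ᵐ[μ] μ[fun ω => A ω * W ω | m] - μ[Qn * A | m] := by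
    rw [hh_eq]; exact condExp_sub hAWint hQnAint m
  -- the conditional expectation of g*h equals (1/πn)(πQ - Qn π) a.e.
  have hKey : μ[g * h | m] =ᵐ[μ]
      fun ω => (πn ω)⁻¹ * (π ω * Q ω - Qn ω * π ω) := by
    filter_upwards [hpull, hsub, hQnA, hπ, hQ] with ω h1 h2 h3 h4 h5
    simp only [Pi.mul_apply, Pi.sub_apply] at h1 h2 h3 ⊢
    rw [h1, h2, h3, ← h4, ← h5]
  have hint_eq : ∫ ω, g ω * h ω ∂μ
      = ∫ ω, (πn ω)⁻¹ * (π ω * Q ω - Qn ω * π ω) ∂μ := by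
    calc ∫ ω, g ω * h ω ∂μ = ∫ ω, (g * h) ω ∂μ := rfl
      _ = ∫ ω, (μ[g * h | m]) ω ∂μ := (integral_condExp hm).symm
      _ = ∫ ω, (πn ω)⁻¹ * (π ω * Q ω - Qn ω * π ω) ∂μ := integral_congr_ae hKey
  -- split the main integral
  have hsplit : ∫ ω, (Qn ω - ηn + (A ω / πn ω) * (W ω - Qn ω)) ∂μ
      = (∫ ω, (Qn ω - ηn) ∂μ) + ∫ ω, g ω * h ω ∂μ := by
    have heq : (fun ω => Qn ω - ηn + (A ω / πn ω) * (W ω - Qn ω))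
        = fun ω => (Qn ω - ηn) + g ω * h ω := by
      funext ω; simp only [hg_def, hh_def]; ring
    rw [heq]
    exact integral_add (hQnint.sub (integrable_const ηn)) hghint
  have hQn0 : ∫ ω, (Qn ω - ηn) ∂μ = 0 := by
    rw [integral_sub hQnint (integrable_const ηn), integral_const]
    simp [hηn]
  rcases hDR with hπeq | hQeq
  · -- πn = π a.s.
    have : ∫ ω, (πn ω)⁻¹ * (π ω * Q ω - Qn ω * π ω) ∂μ = ∫ ω, (Q ω - Qn ω) ∂μ := by
      refine integral_congr_ae ?_
      filter_upwards [hπeq, hπpos] with ω h1 h2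
      rw [h1]
      field_simp
    rw [hsplit, hQn0, hint_eq, this, integral_sub hQint hQnint, ← hη, ← hηn]
    ring
  · -- Qn = Q a.s.
    have h0 : ∫ ω, (πn ω)⁻¹ * (π ω * Q ω - Qn ω * π ω) ∂μ = 0 := by
      rw [show (0:ℝ) = ∫ _ω, (0:ℝ) ∂μ by simp]
      refine integral_congr_ae ?_
      filter_upwards [hQeq] with ω h1
      rw [h1]; ring
    have hηeq : ηn = η := by
      rw [hηn, hη]; exact integral_congr_ae hQeq
    rw [hsplit, hQn0, hint_eq, h0, hηeq]
    ring
end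

section
/- Let z₁, z₂, t be real numbers with z₁ < z₂, z₂ > 1 and t > 0. Then ( exp((1 − z₂)·t) + exp((1 − z₁)·t) ) / ( 1 + exp((z₂ − z₁)·t) ) < 1. -/
theorem harmful_effect_inequality_general (z₁ z₂ t : ℝ) (hz₂ : 1 < z₂) (ht : 0 < t) :
    (Real.exp ((1 - z₂) * t) + Real.exp ((1 - z₁) * t))
        / (1 + Real.exp ((z₂ - z₁) * t)) < 1 := by
  have hgap : 0 < (z₂ - 1) * t := mul_pos (sub_pos.mpr hz₂) ht
  have hfirst : Real.exp ((1 - z₂) * t) < 1 := Real.exp_lt_one_iff.mpr (by linarith)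
  have hsecond : Real.exp ((1 - z₁) * t) < Real.exp ((z₂ - z₁) * t) :=
    Real.exp_lt_exp.mpr (by linarith)
  rw [div_lt_one (by positivity)]
  linarith

/-- Harmful-effect inequality of the Supplementary Material counterexample:
the multiplicative factor `(exp((1 − z₂)t) + exp((1 − z₁)t))/(1 + exp((z₂ − z₁)t))`
is strictly below 1 when `z₁ < z₂`, `z₂ > 1` and `t > 0`. -/
theorem harmful_effect_inequality (z₁ z₂ t : ℝ) (hz : z₁ < z₂) (hz₂ : 1 < z₂) (ht : 0 < t) :
    (Real.exp ((1 - z₂) * t) + Real.exp ((1 - z₁) * t))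
        / (1 + Real.exp ((z₂ - z₁) * t)) < 1 :=
  harmful_effect_inequality_general z₁ z₂ t hz₂ ht
end

section
/- Let z₁, z₂, t be real numbers with 0 < z₁ < 1 < z₂ and t > log(2)/(1 − z₁). Then simultaneously: (i) (1/2)·exp(−z₁·t) + (1/2)·exp(−z₂·t) > exp(−t), and (ii) (1/2)·exp(−z₂·t) < (1/2)·exp(−t). -/
/-- Headline conclusion of the Supplementary Material counterexample: with
`0 < z₁ < 1 < z₂` and `t > log 2/(1 − z₁)`, treatment is beneficial for
survival, `(1/2)exp(−z₁t) + (1/2)exp(−z₂t) > exp(−t)`, while harmful for the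
joint probability, `(1/2)exp(−z₂t) < (1/2)exp(−t)`. -/
theorem joint_probability_counterexample (z₁ z₂ t : ℝ)
    (hz₁ : 0 < z₁) (hz₁1 : z₁ < 1) (hz₂ : 1 < z₂)
    (ht : Real.log 2 / (1 - z₁) < t) :
    Real.exp (-t) < (1 / 2) * Real.exp (-z₁ * t) + (1 / 2) * Real.exp (-z₂ * t)
    ∧ (1 / 2) * Real.exp (-z₂ * t) < (1 / 2) * Real.exp (-t) := by
  have h1z : 0 < 1 - z₁ := by linarith
  have hlog2 : (0:ℝ) < Real.log 2 := Real.log_pos (by norm_num)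
  have ht0 : 0 < t := lt_trans (div_pos hlog2 h1z) ht
  have hkey : Real.log 2 < (1 - z₁) * t := by
    have := (div_lt_iff₀ h1z).mp ht
    linarith
  have h2 : (2:ℝ) < Real.exp ((1 - z₁) * t) := by
    calc (2:ℝ) = Real.exp (Real.log 2) := (Real.exp_log (by norm_num)).symm
    _ < Real.exp ((1 - z₁) * t) := Real.exp_lt_exp.mpr hkey
  constructor
  · have hpos : 0 < (1 / 2) * Real.exp (-z₂ * t) := by positivity
    have h3 : Real.exp (-t) < (1 / 2) * Real.exp (-z₁ * t) := by
      have he : Real.exp ((1 - z₁) * t) = Real.exp (-z₁ * t) / Real.exp (-t) := by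
        rw [← Real.exp_sub]; ring_nf
      rw [he] at h2
      have := (lt_div_iff₀ (Real.exp_pos (-t))).mp h2
      linarith
    linarith
  · have hlt : -z₂ * t < -t := by nlinarith
    have := Real.exp_lt_exp.mpr hlt
    linarith
end
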